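/- Let Ψ(K,M) := (½ J^{-1}K^T M^{-1}K, K, M) for (K,M) with M invertible symmetric. Then Ψ is equivariant for the Jacobi group action (g,A,B)·(K,M) = (Kg^{-1} - MA^T J, M) on the dual Heisenberg algebra and the coadjoint action Ad*_{(g,A,B)^{-1}}(Y,K,M) = (gYg^{-1} + J^{-1}(JAKg^{-1})^{sym} - ½ A M A^T J, Kg^{-1} - MA^T J, M) on the dual Jacobi algebra: Ψ((g,A,B)·(K,M)) = Ad*_{(g,A,B)^{-1}} Ψ(K,M). -/

import Mathlib

/-! Write `K' = Kg⁻¹ - MAᵀJ`. From `gᵀJg = J` one gets `J⁻¹(g⁻¹)ᵀ = gJ⁻¹`, hence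
`J⁻¹K'ᵀ = gJ⁻¹Kᵀ + AM`, and `½ J⁻¹K'ᵀM⁻¹K'` expands to `g(½ J⁻¹KᵀM⁻¹K)g⁻¹`, minus `½ AMAᵀJ`,
plus the cross terms `½(AKg⁻¹ - gJ⁻¹KᵀAᵀJ)`. Since `Jᵀ = -J`, these cross terms are
`J⁻¹(JAKg⁻¹)^sym`. -/

open Matrix

/-- The symmetric part of a square matrix. -/
noncomputable def symPartM {m : Type*} [Fintype m] (M : Matrix m m ℝ) : Matrix m m ℝ :=
  (1 / 2 : ℝ) • (M + Mᵀ)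

/-- The momentum map `Ψ(K,M) = (½ J⁻¹ Kᵀ M⁻¹ K, K, M)` from the dual Heisenberg algebra
to the dual Jacobi algebra. -/
noncomputable def PsiMap {k d : ℕ} (J : Matrix (Fin (2 * k)) (Fin (2 * k)) ℝ)
    (K : Matrix (Fin d) (Fin (2 * k)) ℝ) (M : Matrix (Fin d) (Fin d) ℝ) :
    Matrix (Fin (2 * k)) (Fin (2 * k)) ℝ × Matrix (Fin d) (Fin (2 * k)) ℝ ×
      Matrix (Fin d) (Fin d) ℝ :=
  ((1 / 2 : ℝ) • (J⁻¹ * Kᵀ * M⁻¹ * K), (K, M))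

section

variable {m n R : Type*} [Fintype m] [DecidableEq m] [Fintype n] [CommRing R]

theorem inv_mul_transpose_inv_eq_mul_inv {J g : Matrix m m R} (hJ : IsUnit J.det) (hg : gᵀ * J * g = J) :
    J⁻¹ * (g⁻¹)ᵀ = g * J⁻¹ := by
  have hginvT : (g⁻¹)ᵀ = J * g * J⁻¹ := by
    rw [transpose_nonsing_inv]
    refine inv_eq_right_inv ?_
    rw [← Matrix.mul_assoc, ← Matrix.mul_assoc, hg, mul_nonsing_inv J hJ]
  rw [hginvT, Matrix.mul_assoc, nonsing_inv_mul_cancel_left _ _ hJ]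

theorem inv_mul_symPartM_mul {J : Matrix m m ℝ} (hanti : Jᵀ = -J) (hJ : IsUnit J.det)
    (X : Matrix m m ℝ) :
    J⁻¹ * symPartM (J * X) = (1 / 2 : ℝ) • (X - J⁻¹ * Xᵀ * J) := by
  rw [symPartM, transpose_mul, hanti, Matrix.mul_smul, Matrix.mul_add,
    nonsing_inv_mul_cancel_left _ _ hJ, Matrix.mul_neg, Matrix.mul_neg, sub_eq_add_neg,
    Matrix.mul_assoc]

theorem inv_mul_transpose_mul_inv_sub {J : Matrix m m R} (hanti : Jᵀ = -J) (hJ : IsUnit J.det)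
    {g : Matrix m m R} (hg : gᵀ * J * g = J) (K : Matrix n m R) {M : Matrix n n R}
    (hM : Mᵀ = M) (A : Matrix m n R) :
    J⁻¹ * (K * g⁻¹ - M * Aᵀ * J)ᵀ = g * J⁻¹ * Kᵀ + A * M := by
  rw [transpose_sub, transpose_mul, transpose_mul, transpose_mul, hanti, hM, transpose_transpose,
    Matrix.mul_sub, ← Matrix.mul_assoc, inv_mul_transpose_inv_eq_mul_inv hJ hg,
    Matrix.neg_mul, Matrix.mul_neg, nonsing_inv_mul_cancel_left _ _ hJ, sub_neg_eq_add]

end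

theorem psi_equivariant_general (k d : ℕ)
    (J : Matrix (Fin (2 * k)) (Fin (2 * k)) ℝ) (hanti : Jᵀ = -J) (hJ : IsUnit J.det)
    (g : Matrix (Fin (2 * k)) (Fin (2 * k)) ℝ) (hg : gᵀ * J * g = J)
    (A : Matrix (Fin (2 * k)) (Fin d) ℝ)
    (K : Matrix (Fin d) (Fin (2 * k)) ℝ) (M : Matrix (Fin d) (Fin d) ℝ)
    (hM : Mᵀ = M) (hMdet : IsUnit M.det) :
    PsiMap J (K * g⁻¹ - M * Aᵀ * J) M =
      (g * ((1 / 2 : ℝ) • (J⁻¹ * Kᵀ * M⁻¹ * K)) * g⁻¹ +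
          J⁻¹ * symPartM (J * A * K * g⁻¹) - (1 / 2 : ℝ) • (A * M * Aᵀ * J),
        (K * g⁻¹ - M * Aᵀ * J, M)) := by
  have hsym : J⁻¹ * symPartM (J * A * K * g⁻¹) =
      (1 / 2 : ℝ) • (A * K * g⁻¹ - g * J⁻¹ * Kᵀ * Aᵀ * J) := by
    rw [Matrix.mul_assoc J, Matrix.mul_assoc J, inv_mul_symPartM_mul hanti hJ,
      transpose_mul, transpose_mul, ← Matrix.mul_assoc, ← Matrix.mul_assoc,
      inv_mul_transpose_inv_eq_mul_inv hJ hg, Matrix.mul_assoc A]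
  simp only [PsiMap, Prod.mk.injEq, and_true]
  rw [hsym, inv_mul_transpose_mul_inv_sub hanti hJ hg K hM A]
  simp only [Matrix.add_mul, Matrix.mul_sub, Matrix.mul_smul, Matrix.smul_mul, Matrix.mul_assoc,
    nonsing_inv_mul_cancel_left _ _ hMdet, mul_nonsing_inv_cancel_left _ _ hMdet]
  module

/-- `Ψ(K,M) = (½ J⁻¹Kᵀ M⁻¹K, K, M)` is equivariant: applying `Ψ` to the Jacobi group
action `(g,A,B)·(K,M) = (Kg⁻¹ - MAᵀJ, M)` on the dual Heisenberg algebra agrees with the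
coadjoint action
`Ad*_{(g,A,B)⁻¹}(Y,K,M) = (gYg⁻¹ + J⁻¹(JAKg⁻¹)^sym - ½ AMAᵀJ, Kg⁻¹ - MAᵀJ, M)`
applied to `Ψ(K,M)`. -/
theorem psi_equivariant (k d : ℕ)
    (J : Matrix (Fin (2 * k)) (Fin (2 * k)) ℝ) (hanti : Jᵀ = -J) (hJ : IsUnit J.det)
    (g : Matrix (Fin (2 * k)) (Fin (2 * k)) ℝ) (hg : gᵀ * J * g = J)
    (hgdet : IsUnit g.det)
    (A : Matrix (Fin (2 * k)) (Fin d) ℝ) (B : Matrix (Fin d) (Fin d) ℝ) (hB : Bᵀ = B)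
    (K : Matrix (Fin d) (Fin (2 * k)) ℝ) (M : Matrix (Fin d) (Fin d) ℝ)
    (hM : Mᵀ = M) (hMdet : IsUnit M.det) :
    PsiMap J (K * g⁻¹ - M * Aᵀ * J) M =
      (g * ((1 / 2 : ℝ) • (J⁻¹ * Kᵀ * M⁻¹ * K)) * g⁻¹ +
          J⁻¹ * symPartM (J * A * K * g⁻¹) - (1 / 2 : ℝ) • (A * M * Aᵀ * J),
        (K * g⁻¹ - M * Aᵀ * J, M)) :=
  psi_equivariant_general k d J hanti hJ g hg A K M hM hMdet
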